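/- arXiv:1608.08520 — 4 statements merged into one kernel-verified Lean document; each statement's English description precedes it below -/
import Mathlib

section
/- For each t ∈ ℕ, let P_t = {(x,y) ∈ ℝ² : |2x + (2t−2)y| ≤ t²−2t+2 and |(2−2t)x + 2y| ≤ t²−2t+2}. Then |P_t ∩ ℤ²| = t²−2t+2 if t is odd and t²−2t+5 if t is even. -/
/-!
Put `s = t - 1` and `N = s ^ 2 + 1`. In the coordinates `x` and `v = y - s x` the two conditions
defining `P_t` read `|2 v| ≤ N` and `|2 (N x + s v)| ≤ N`. For each admissible `v`, the second
one asks `2 N x` to lie in a closed interval of length `2 N` with right end `N - 2 s v`: there is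
one such `x`, or two when `2 N ∣ N - 2 s v`. For `s` even this never happens (`N - 2 s v` is
odd), so there are exactly `N` points; for `s` odd it happens exactly at `v = ± N / 2`, giving
`N + 3` points.
-/

open Finset

/-- The integer points of `P_{s + 1}`. -/
def twistedSquare (s : ℤ) : Set (ℤ × ℤ) :=
  {p | |2 * (p.1 + s * p.2)| ≤ s ^ 2 + 1 ∧ |2 * (p.2 - s * p.1)| ≤ s ^ 2 + 1}

theorem Int.card_multiples_mem_Icc {d : ℤ} (hd : 0 < d) (c : ℤ) :
    Nat.card {x : ℤ // d * x ∈ Set.Icc (c - d) c} = if d ∣ c then 2 else 1 := by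
  split_ifs with hdvd
  · obtain ⟨a, rfl⟩ := hdvd
    have hset : {x : ℤ | d * x ∈ Set.Icc (d * a - d) (d * a)} = ({a - 1, a} : Finset ℤ) := by
      ext x
      simp only [Set.mem_ofPred_eq, Set.mem_Icc, coe_insert, coe_singleton, Set.mem_insert_iff,
        Set.mem_singleton_iff]
      rw [show d * a - d = d * (a - 1) by ring, mul_le_mul_iff_right₀ hd,
        mul_le_mul_iff_right₀ hd]
      omega
    change Nat.card ({x : ℤ | d * x ∈ Set.Icc _ _} : Set ℤ) = _
    rw [hset, Nat.card_coe_set_eq, Set.ncard_coe_finset]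
    exact card_pair (by omega)
  · have hset : {x : ℤ | d * x ∈ Set.Icc (c - d) c} = {c / d} := by
      ext x
      simp only [Set.mem_ofPred_eq, Set.mem_Icc, Set.mem_singleton_iff]
      have hlt : c / d < x + 1 ↔ c - d ≤ d * x := by
        rw [Int.ediv_lt_iff_lt_mul hd]
        refine ⟨fun h => by linarith, fun h => lt_of_le_of_ne (by linarith) fun heq => ?_⟩
        exact hdvd ⟨x + 1, by linarith⟩
      rw [← hlt, mul_comm, ← Int.le_ediv_iff_mul_le hd]
      omega
    change Nat.card ({x : ℤ | d * x ∈ Set.Icc _ _} : Set ℤ) = _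
    rw [hset, Nat.card_unique]

def twistedSquareEquivSigma (s : ℤ) :
    twistedSquare s ≃ Σ v : Icc (-((s ^ 2 + 1) / 2)) ((s ^ 2 + 1) / 2),
      {x : ℤ // 2 * (s ^ 2 + 1) * x ∈
        Set.Icc (s ^ 2 + 1 - 2 * s * (v : ℤ) - 2 * (s ^ 2 + 1)) (s ^ 2 + 1 - 2 * s * (v : ℤ))} where
  toFun p := ⟨⟨p.1.2 - s * p.1.1, by
      obtain ⟨-, h⟩ := p.2
      rw [abs_le] at h
      rw [mem_Icc]
      omega⟩, ⟨p.1.1, by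
      obtain ⟨hlo, hhi⟩ := abs_le.mp p.2.1
      exact ⟨by linear_combination hlo, by linear_combination hhi⟩⟩⟩
  invFun q := ⟨(q.2.1, q.1.1 + s * q.2.1), by
      obtain ⟨⟨v, hv⟩, x, hx⟩ := q
      rw [mem_Icc] at hv
      refine ⟨abs_le.mpr ⟨by linear_combination hx.1, by linear_combination hx.2⟩, abs_le.mpr ?_⟩
      dsimp only
      omega⟩
  left_inv p := by ext <;> simp
  right_inv q := Sigma.subtype_ext (Subtype.ext (by simp)) (by simp)

theorem card_twistedSquare_eq_sum (s : ℤ) :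
    Nat.card (twistedSquare s) = ∑ v ∈ Icc (-((s ^ 2 + 1) / 2)) ((s ^ 2 + 1) / 2),
      if 2 * (s ^ 2 + 1) ∣ s ^ 2 + 1 - 2 * s * v then 2 else 1 := by
  have hd : 0 < 2 * (s ^ 2 + 1) := by positivity
  have (c : ℤ) : Finite {x : ℤ // 2 * (s ^ 2 + 1) * x ∈ Set.Icc (c - 2 * (s ^ 2 + 1)) c} :=
    Nat.finite_of_card_ne_zero (by rw [Int.card_multiples_mem_Icc hd]; split_ifs <;> simp)
  rw [Nat.card_congr (twistedSquareEquivSigma s), Nat.card_sigma]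
  simp only [Int.card_multiples_mem_Icc hd]
  exact sum_coe_sort _ fun v : ℤ => if 2 * (s ^ 2 + 1) ∣ s ^ 2 + 1 - 2 * s * v then 2 else 1

namespace TwistedSquare

theorem not_dvd_of_even {s : ℤ} (hs : Even s) (v : ℤ) :
    ¬ 2 * (s ^ 2 + 1) ∣ s ^ 2 + 1 - 2 * s * v := by
  obtain ⟨j, rfl⟩ := hs
  intro hdvd
  have hodd : Odd ((j + j) ^ 2 + 1 - 2 * (j + j) * v) := ⟨2 * j ^ 2 - 2 * j * v, by ring⟩
  exact Int.not_even_iff_odd.mpr hodd (even_iff_two_dvd.mpr (dvd_trans (dvd_mul_right 2 _) hdvd))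

theorem dvd_iff_of_odd {s v : ℤ} (hs : Odd s) (hv : |2 * v| ≤ s ^ 2 + 1) :
    2 * (s ^ 2 + 1) ∣ s ^ 2 + 1 - 2 * s * v ↔ 2 * v = s ^ 2 + 1 ∨ 2 * v = -(s ^ 2 + 1) := by
  obtain ⟨j, rfl⟩ := hs
  rw [abs_le] at hv
  constructor
  · rintro ⟨k, hk⟩
    -- multiply by `s` and use `s ^ 2 ≡ -1 [ZMOD s ^ 2 + 1]`
    have hl : 2 * v + ((2 * j + 1) ^ 2 + 1) =
        2 * ((2 * j + 1) ^ 2 + 1) * ((2 * j + 1) * k + v - j) := by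
      linear_combination (2 * j + 1) * hk
    have hN : 0 < (2 * j + 1) ^ 2 + 1 := by positivity
    have h0 : 0 ≤ (2 * j + 1) * k + v - j := by nlinarith
    have h1 : (2 * j + 1) * k + v - j ≤ 1 := by nlinarith
    rcases (show (2 * j + 1) * k + v - j = 0 ∨ (2 * j + 1) * k + v - j = 1 by omega) with h | h
    · right; rw [h] at hl; linarith
    · left; rw [h] at hl; linarith
  · rintro (h | h)
    · exact ⟨-j, by linear_combination (-(2 * j + 1)) * h⟩
    · exact ⟨j + 1, by linear_combination (-(2 * j + 1)) * h⟩

end TwistedSquare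

theorem card_twistedSquare_of_even {s : ℤ} (hs : Even s) :
    (Nat.card (twistedSquare s) : ℤ) = s ^ 2 + 1 := by
  obtain ⟨j, hj⟩ := hs
  have hN : s ^ 2 + 1 = 2 * (2 * j ^ 2) + 1 := by rw [hj]; ring
  have hpos : 0 < s ^ 2 + 1 := by positivity
  rw [card_twistedSquare_eq_sum,
    sum_congr rfl fun v _ => if_neg (TwistedSquare.not_dvd_of_even ⟨j, hj⟩ v),
    sum_const, smul_eq_mul, mul_one, Int.card_Icc, Int.toNat_of_nonneg (by omega)]
  omega

theorem card_twistedSquare_of_odd {s : ℤ} (hs : Odd s) :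
    (Nat.card (twistedSquare s) : ℤ) = s ^ 2 + 4 := by
  obtain ⟨j, hj⟩ := hs
  have hN : s ^ 2 + 1 = 2 * (2 * j ^ 2 + 2 * j + 1) := by rw [hj]; ring
  have hpos : 0 < s ^ 2 + 1 := by positivity
  have hcorners : {v ∈ Icc (-((s ^ 2 + 1) / 2)) ((s ^ 2 + 1) / 2) |
      2 * v = s ^ 2 + 1 ∨ 2 * v = -(s ^ 2 + 1)} = {(s ^ 2 + 1) / 2, -((s ^ 2 + 1) / 2)} := by
    ext v
    simp only [mem_filter, mem_Icc, mem_insert, mem_singleton]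
    omega
  have hcard := card_filter_add_card_filter_not (s := Icc (-((s ^ 2 + 1) / 2)) ((s ^ 2 + 1) / 2))
    (fun v => 2 * v = s ^ 2 + 1 ∨ 2 * v = -(s ^ 2 + 1))
  rw [hcorners, card_pair (by omega), Int.card_Icc] at hcard
  rw [card_twistedSquare_eq_sum, sum_congr rfl fun v hv =>
      if_congr (TwistedSquare.dvd_iff_of_odd ⟨j, hj⟩ (by rw [mem_Icc] at hv; rw [abs_le]; omega))
        rfl rfl,
    sum_ite, sum_const, sum_const, hcorners, card_pair (by omega), smul_eq_mul, smul_eq_mul]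
  omega

/-- The "twisting square" `P_t` and its number of integer points. -/
theorem stmt_2 (t : ℕ) :
    (Odd t →
      (Nat.card {p : ℤ × ℤ //
          |2 * p.1 + (2 * (t : ℤ) - 2) * p.2| ≤ (t : ℤ) ^ 2 - 2 * t + 2 ∧
          |(2 - 2 * (t : ℤ)) * p.1 + 2 * p.2| ≤ (t : ℤ) ^ 2 - 2 * t + 2} : ℤ) =
        (t : ℤ) ^ 2 - 2 * t + 2) ∧
    (Even t →
      (Nat.card {p : ℤ × ℤ //
          |2 * p.1 + (2 * (t : ℤ) - 2) * p.2| ≤ (t : ℤ) ^ 2 - 2 * t + 2 ∧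
          |(2 - 2 * (t : ℤ)) * p.1 + 2 * p.2| ≤ (t : ℤ) ^ 2 - 2 * t + 2} : ℤ) =
        (t : ℤ) ^ 2 - 2 * t + 5) := by
  have hP : Nat.card {p : ℤ × ℤ //
      |2 * p.1 + (2 * (t : ℤ) - 2) * p.2| ≤ (t : ℤ) ^ 2 - 2 * t + 2 ∧
      |(2 - 2 * (t : ℤ)) * p.1 + 2 * p.2| ≤ (t : ℤ) ^ 2 - 2 * t + 2} =
      Nat.card (twistedSquare (t - 1)) := by
    refine Nat.card_congr (Equiv.subtypeEquivRight fun p => ?_)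
    rw [twistedSquare, Set.mem_ofPred_eq]
    ring_nf
  refine ⟨fun ht => ?_, fun ht => ?_⟩
  · rw [hP, card_twistedSquare_of_even (even_sub_one.mpr (by exact_mod_cast ht))]
    ring
  · rw [hP, card_twistedSquare_of_odd (odd_sub_one.mpr (by exact_mod_cast ht))]
    ring
end

section
/- For t ≥ 2, the Frobenius number of the three integers t, t+1, t+2 equals (floor((t−2)/2) + 1)·t − 1; that is, this number is not representable as a nonnegative integer combination λ₁t + λ₂(t+1) + λ₃(t+2), while every larger integer is representable. -/
/-!
A combination `l₁ t + l₂ (t+1) + l₃ (t+2)` with `s = l₁ + l₂ + l₃` summands equals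
`s t + r` with `0 ≤ r ≤ 2 s`, and every such value occurs. So the representable integers are
exactly the union of the intervals `[s t, s (t+2)]`. For `q = ⌊t/2⌋` the intervals with
`s < q` end below `q t - 1`, while from `s = q` on they
overlap (as `t - 1 ≤ 2 q`) and cover everything from `q t`.
-/

theorem exists_eq_mul_add_mul_succ_add_mul_add_two_iff (t n : ℕ) :
    (∃ l₁ l₂ l₃ : ℕ, n = l₁ * t + l₂ * (t + 1) + l₃ * (t + 2)) ↔
      ∃ s, s * t ≤ n ∧ n ≤ s * (t + 2) := by
  constructor
  · rintro ⟨l₁, l₂, l₃, rfl⟩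
    exact ⟨l₁ + l₂ + l₃, by nlinarith, by nlinarith⟩
  · rintro ⟨s, hlo, hhi⟩
    obtain ⟨r, rfl⟩ := Nat.exists_eq_add_of_le hlo
    refine ⟨s - (r % 2 + r / 2), r % 2, r / 2, ?_⟩
    have hr : r % 2 + r / 2 ≤ s := by nlinarith [Nat.mod_add_div r 2, Nat.mod_lt r two_pos]
    obtain ⟨a, ha⟩ := Nat.exists_eq_add_of_le hr
    rw [ha, Nat.add_sub_cancel_left]
    nlinarith [Nat.mod_add_div r 2]

theorem mul_add_two_add_two_le_of_lt {s q t : ℕ} (hs : s < q) (hq : 2 * q ≤ t) :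
    s * (t + 2) + 2 ≤ q * t := by
  nlinarith

theorem exists_mul_le_le_mul_add_two {q t n : ℕ} (ht : 0 < t) (hq : t ≤ 2 * q + 1)
    (hn : q * t ≤ n) : ∃ s, s * t ≤ n ∧ n ≤ s * (t + 2) := by
  have hqs : q ≤ n / t := (Nat.le_div_iff_mul_le ht).2 hn
  refine ⟨n / t, Nat.div_mul_le_self n t, ?_⟩
  have hdiv := Nat.div_add_mod n t
  have hmod := Nat.mod_lt n ht
  nlinarith

/-- The Frobenius number of `t, t+1, t+2` is `(⌊(t-2)/2⌋ + 1)·t - 1` for `t ≥ 2`: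
this number is not a nonnegative integer combination of `t, t+1, t+2`,
while every larger integer is. -/
theorem stmt_3 (t : ℕ) (ht : 2 ≤ t) :
    ¬ (∃ l₁ l₂ l₃ : ℕ, ((t - 2) / 2 + 1) * t - 1 =
        l₁ * t + l₂ * (t + 1) + l₃ * (t + 2)) ∧
    ∀ n : ℕ, ((t - 2) / 2 + 1) * t - 1 < n →
      ∃ l₁ l₂ l₃ : ℕ, n = l₁ * t + l₂ * (t + 1) + l₃ * (t + 2) := by
  set q := (t - 2) / 2 + 1
  have hqt : 2 ≤ q * t := Nat.mul_le_mul (by omega : 1 ≤ q) ht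
  simp only [exists_eq_mul_add_mul_succ_add_mul_add_two_iff]
  refine ⟨?_, fun n hn =>
    exists_mul_le_le_mul_add_two (q := q) (by omega) (by omega) (by omega)⟩
  rintro ⟨s, hlo, hhi⟩
  rcases lt_or_ge s q with hs | hs
  · have := mul_add_two_add_two_le_of_lt hs (by omega : 2 * q ≤ t)
    omega
  · have := Nat.mul_le_mul_right t hs
    omega
end

section
/- The family S_t = {x ∈ ℤ : ∃ y, y ≥ 0 ∧ x·y = t} has cardinality equal to the number of positive divisors of t (for t ≥ 1), and this function is not an eventual quasi-polynomial in t. -/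
/-!
Since `t > 0` and `y ≥ 0` force `x > 0`, `S_t` is the set of positive divisors of `t`. If `d(t)`
were a quasi-polynomial of period `m`, its constituent on the class `1 mod m` would take the value
`2` at the infinitely many primes `p ≡ 1 mod m`, hence be the constant `2`; but `p² ≡ 1 mod m` as
well and `d(p²) = 3`.
-/

/-- A function `g : ℕ → ℤ` is an eventual quasi-polynomial (EQP). -/
def IsEQP (g : ℕ → ℤ) : Prop :=
  ∃ (m N : ℕ) (f : ℕ → Polynomial ℚ), 0 < m ∧
    ∀ t : ℕ, N ≤ t → ((g t : ℚ) = (f (t % m)).eval (t : ℚ))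

open Polynomial Filter

lemma setOf_exists_nonneg_mul_eq_natCast {n : ℕ} (hn : n ≠ 0) :
    {x : ℤ | ∃ y, 0 ≤ y ∧ x * y = n} = ((↑) : ℕ → ℤ) '' n.divisors := by
  ext x
  constructor
  · rintro ⟨y, hy, hxy⟩
    have hx : 0 < x := pos_of_mul_pos_left (hxy ▸ by positivity) hy
    lift x to ℕ using hx.le
    exact ⟨x, Nat.mem_divisors.mpr ⟨Int.natCast_dvd_natCast.mp ⟨y, hxy.symm⟩, hn⟩, rfl⟩
  · rintro ⟨d, hd, rfl⟩
    refine ⟨(n / d : ℕ), by positivity, ?_⟩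
    rw [← Nat.cast_mul, Nat.mul_div_cancel' (Nat.dvd_of_mem_divisors hd)]

lemma Nat.card_setOf_exists_nonneg_mul_eq {n : ℕ} (hn : n ≠ 0) :
    Nat.card {x : ℤ // ∃ y, 0 ≤ y ∧ x * y = n} = n.divisors.card := by
  change Nat.card ({x : ℤ | ∃ y, 0 ≤ y ∧ x * y = n} : Set ℤ) = _
  rw [setOf_exists_nonneg_mul_eq_natCast hn, Nat.card_image_of_injective Nat.cast_injective,
    Nat.card_coe_set_eq, Set.ncard_coe_finset]

lemma Nat.card_divisors_prime_pow {p : ℕ} (hp : p.Prime) (k : ℕ) :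
    (p ^ k).divisors.card = k + 1 := by
  rw [Nat.divisors_prime_pow hp, Finset.card_map, Finset.card_range]

lemma Polynomial.eq_C_of_frequently_eval_natCast_eq {f : ℚ[X]} {c : ℚ}
    (h : ∃ᶠ n : ℕ in atTop, f.eval (n : ℚ) = c) : f = C c := by
  refine eq_of_infinite_eval_eq f (C c) ?_
  refine ((Nat.frequently_atTop_iff_infinite.mp h).image Nat.cast_injective.injOn).mono ?_
  rintro _ ⟨n, hn, rfl⟩
  simpa using hn

theorem not_isEQP_card_divisors : ¬ IsEQP (fun t : ℕ => (t.divisors.card : ℤ)) := by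
  rintro ⟨m, N, f, hm, hf⟩
  have hprimes := (Nat.frequently_atTop_modEq_one hm.ne').and_eventually (eventually_ge_atTop N)
  have hconst : f (1 % m) = C 2 := by
    refine eq_C_of_frequently_eval_natCast_eq (hprimes.mono ?_)
    rintro p ⟨⟨hp, hpm⟩, hNp⟩
    have hp2 : ((p.divisors.card : ℤ) : ℚ) = (f (p % m)).eval (p : ℚ) := hf p hNp
    rw [← pow_one p, Nat.card_divisors_prime_pow hp, pow_one, show p % m = 1 % m from hpm] at hp2
    norm_num at hp2
    exact hp2.symm
  obtain ⟨p, ⟨hp, hpm⟩, hNp⟩ := hprimes.exists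
  have hp3 : (((p ^ 2).divisors.card : ℤ) : ℚ) = (f (p ^ 2 % m)).eval ((p ^ 2 : ℕ) : ℚ) :=
    hf (p ^ 2) (hNp.trans (Nat.le_self_pow two_ne_zero p))
  rw [Nat.card_divisors_prime_pow hp, show p ^ 2 % m = 1 ^ 2 % m from hpm.pow 2, one_pow,
    hconst] at hp3
  norm_num at hp3

/-- The family `S_t = {x ∈ ℤ : ∃ y ≥ 0, x·y = t}` has cardinality the number of
positive divisors of `t` (for `t ≥ 1`), and this function is not an EQP. -/
theorem stmt_5 :
    (∀ t : ℕ, 1 ≤ t →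
      Nat.card {x : ℤ // ∃ y : ℤ, y ≥ 0 ∧ x * y = (t : ℤ)} = t.divisors.card) ∧
    ¬ IsEQP (fun t : ℕ => (t.divisors.card : ℤ)) :=
  ⟨fun _ ht => Nat.card_setOf_exists_nonneg_mul_eq (Nat.one_le_iff_ne_zero.mp ht),
    not_isEQP_card_divisors⟩
end

section
/- Let P ⊆ ℝ^d be a polyhedron of the form P = conv{x₁,...,x_q} + cone{y₁,...,y_r} + span{z₁,...,z_s}, with xᵢ ∈ ℚ^d and yⱼ, z_k ∈ ℤ^d \ {0}, and suppose r ≥ 1 or s ≥ 1. Let Q = conv{x₁,...,x_q} + zono{y₁,...,y_r, z₁,...,z_s}, where zono{w₁,...,w_u} = {λ₁w₁ + ... + λ_u w_u : 0 ≤ λᵢ ≤ 1}. Then: (a) if Q contains an integer point, then P contains infinitely many integer points; (b) if Q contains no integer point, then P contains no integer point. -/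
/-!
Every integer point of `P` is carried into `Q` by subtracting the integer parts of its cone and
span coefficients, an integer combination of the integer generators; conversely, from an integer
point of `Q ⊆ P` one walks off to infinity in `P` along a nonzero integer ray or line generator.
-/

def IsIntegerPoint {d : ℕ} (v : Fin d → ℝ) : Prop := ∀ i, ∃ n : ℤ, v i = (n : ℝ)

open Finset Set

variable {M ι κ μ : Type*} [AddCommGroup M] [Module ℝ M] [Fintype ι] [Fintype κ] [Fintype μ]

/-- `conv X + cone Y + span Z`. -/
def convConeSpan (X : ι → M) (Y : κ → M) (Z : μ → M) : Set M :=
  {v | ∃ (l : ι → ℝ) (m : κ → ℝ) (n : μ → ℝ), (∀ i, 0 ≤ l i) ∧ ∑ i, l i = 1 ∧ (∀ j, 0 ≤ m j) ∧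
    v = ∑ i, l i • X i + ∑ j, m j • Y j + ∑ k, n k • Z k}

/-- `conv X + zono (Y, Z)`. -/
def convZono (X : ι → M) (Y : κ → M) (Z : μ → M) : Set M :=
  {v | ∃ (l : ι → ℝ) (m : κ → ℝ) (n : μ → ℝ), (∀ i, 0 ≤ l i) ∧ ∑ i, l i = 1 ∧
    (∀ j, 0 ≤ m j ∧ m j ≤ 1) ∧ (∀ k, 0 ≤ n k ∧ n k ≤ 1) ∧
    v = ∑ i, l i • X i + ∑ j, m j • Y j + ∑ k, n k • Z k}

lemma sum_add_single_smul [DecidableEq ι] (c : ι → ℝ) (W : ι → M) (i : ι) (t : ℝ) :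
    ∑ j, (c + Pi.single i t : ι → ℝ) j • W j = ∑ j, c j • W j + t • W i := by
  simp [add_smul, sum_add_distrib, Pi.single_apply, ite_smul]

lemma sum_smul_eq_sum_floor_zsmul_add_sum_fract_smul (c : ι → ℝ) (W : ι → M) :
    ∑ j, c j • W j = ∑ j, ⌊c j⌋ • W j + ∑ j, Int.fract (c j) • W j := by
  rw [← sum_add_distrib]
  refine sum_congr rfl fun j _ => ?_
  rw [← Int.cast_smul_eq_zsmul ℝ, ← add_smul, Int.floor_add_fract]

variable {X : ι → M} {Y : κ → M} {Z : μ → M} {v : M}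

lemma convZono_subset_convConeSpan : convZono X Y Z ⊆ convConeSpan X Y Z :=
  fun _ ⟨l, m, n, hl, hl1, hm, _, hv⟩ => ⟨l, m, n, hl, hl1, fun j => (hm j).1, hv⟩

lemma add_smul_mem_convConeSpan_of_cone (hv : v ∈ convConeSpan X Y Z) (j : κ) {t : ℝ}
    (ht : 0 ≤ t) : v + t • Y j ∈ convConeSpan X Y Z := by
  classical
  obtain ⟨l, m, n, hl, hl1, hm, rfl⟩ := hv
  refine ⟨l, m + Pi.single j t, n, hl, hl1,
    fun i => add_nonneg (hm i) ((Pi.single_nonneg.2 ht : (0 : κ → ℝ) ≤ Pi.single j t) i), ?_⟩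
  rw [sum_add_single_smul]
  abel

lemma add_smul_mem_convConeSpan_of_span (hv : v ∈ convConeSpan X Y Z) (k : μ) (t : ℝ) :
    v + t • Z k ∈ convConeSpan X Y Z := by
  classical
  obtain ⟨l, m, n, hl, hl1, hm, rfl⟩ := hv
  refine ⟨l, m, n + Pi.single k t, hl, hl1, hm, ?_⟩
  rw [sum_add_single_smul]
  abel

lemma add_nsmul_mem_convConeSpan {w : M} (hw : w ∈ range Y ∪ range Z)
    (hv : v ∈ convConeSpan X Y Z) (t : ℕ) : v + t • w ∈ convConeSpan X Y Z := by
  rw [← Nat.cast_smul_eq_nsmul ℝ]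
  rcases hw with ⟨j, rfl⟩ | ⟨k, rfl⟩
  · exact add_smul_mem_convConeSpan_of_cone hv j t.cast_nonneg
  · exact add_smul_mem_convConeSpan_of_span hv k t

lemma exists_sub_sum_zsmul_mem_convZono (hv : v ∈ convConeSpan X Y Z) :
    ∃ (a : κ → ℤ) (b : μ → ℤ), v - (∑ j, a j • Y j + ∑ k, b k • Z k) ∈ convZono X Y Z := by
  obtain ⟨l, m, n, hl, hl1, -, rfl⟩ := hv
  refine ⟨fun j => ⌊m j⌋, fun k => ⌊n k⌋, l, fun j => Int.fract (m j), fun k => Int.fract (n k),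
    hl, hl1, fun j => ⟨Int.fract_nonneg _, (Int.fract_lt_one _).le⟩,
    fun k => ⟨Int.fract_nonneg _, (Int.fract_lt_one _).le⟩, ?_⟩
  rw [sum_smul_eq_sum_floor_zsmul_add_sum_fract_smul m,
    sum_smul_eq_sum_floor_zsmul_add_sum_fract_smul n]
  abel

lemma infinite_setOf_mem_of_forall_add_nsmul_mem (L : AddSubgroup M) {S : Set M} {w : M}
    (hvL : v ∈ L) (hwL : w ∈ L) (hw0 : w ≠ 0) (hS : ∀ t : ℕ, v + t • w ∈ S) :
    {u ∈ S | u ∈ L}.Infinite := by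
  refine Set.infinite_of_injective_forall_mem (f := fun t : ℕ => v + t • w) ?_
    fun t => ⟨hS t, L.add_mem hvL (L.nsmul_mem hwL t)⟩
  intro t₁ t₂ h
  have h' : (t₁ : ℝ) • w = (t₂ : ℝ) • w := by
    simpa [Nat.cast_smul_eq_nsmul] using add_left_cancel h
  exact_mod_cast smul_left_injective ℝ hw0 h'

lemma infinite_setOf_mem_convConeSpan_of_mem_convZono (L : AddSubgroup M) (hvQ : v ∈ convZono X Y Z)
    (hvL : v ∈ L) {w : M} (hw : w ∈ range Y ∪ range Z) (hwL : w ∈ L) (hw0 : w ≠ 0) :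
    {u ∈ convConeSpan X Y Z | u ∈ L}.Infinite :=
  infinite_setOf_mem_of_forall_add_nsmul_mem L hvL hwL hw0
    (add_nsmul_mem_convConeSpan hw (convZono_subset_convConeSpan hvQ))

lemma exists_mem_convZono_of_mem_convConeSpan (L : AddSubgroup M) (hY : ∀ j, Y j ∈ L)
    (hZ : ∀ k, Z k ∈ L) (hvP : v ∈ convConeSpan X Y Z) (hvL : v ∈ L) :
    ∃ u ∈ convZono X Y Z, u ∈ L := by
  obtain ⟨a, b, hQ⟩ := exists_sub_sum_zsmul_mem_convZono hvP
  refine ⟨_, hQ, L.sub_mem hvL (L.add_mem ?_ ?_)⟩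
  · exact L.sum_mem fun j _ => L.zsmul_mem (hY j) (a j)
  · exact L.sum_mem fun k _ => L.zsmul_mem (hZ k) (b k)

def integerLattice (d : ℕ) : AddSubgroup (Fin d → ℝ) where
  carrier := {v | IsIntegerPoint v}
  add_mem' {u v} hu hv i := by
    obtain ⟨a, ha⟩ := hu i
    obtain ⟨b, hb⟩ := hv i
    exact ⟨a + b, by simp [ha, hb]⟩
  zero_mem' _ := ⟨0, by simp⟩
  neg_mem' {v} hv i := by
    obtain ⟨a, ha⟩ := hv i
    exact ⟨-a, by simp [ha]⟩

lemma intCast_comp_mem_integerLattice {d : ℕ} (w : Fin d → ℤ) :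
    (Int.cast ∘ w : Fin d → ℝ) ∈ integerLattice d :=
  fun c => ⟨w c, rfl⟩

lemma intCast_comp_ne_zero {d : ℕ} {w : Fin d → ℤ} (hw : w ≠ 0) : (Int.cast ∘ w : Fin d → ℝ) ≠ 0 :=
  fun h => hw (funext fun c => by simpa using congrFun h c)

/-- Zonotope lemma: with `P = conv{xᵢ} + cone{yⱼ} + span{z_k}` (with at least
one ray or line direction) and `Q = conv{xᵢ} + zono{yⱼ, z_k}`:
(a) if `Q` contains an integer point then `P` contains infinitely many;
(b) if `Q` contains no integer point then neither does `P`. -/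
theorem stmt_10 (d q r s : ℕ)
    (x : Fin q → Fin d → ℚ) (y : Fin r → Fin d → ℤ) (z : Fin s → Fin d → ℤ)
    (hy : ∀ j, y j ≠ 0) (hz : ∀ k, z k ≠ 0) (hrs : 1 ≤ r ∨ 1 ≤ s)
    (P Q : Set (Fin d → ℝ))
    (hP : P = {v | ∃ (l : Fin q → ℝ) (m : Fin r → ℝ) (n : Fin s → ℝ),
      (∀ i, 0 ≤ l i) ∧ (∑ i, l i) = 1 ∧ (∀ j, 0 ≤ m j) ∧
      v = (∑ i, l i • fun c => ((x i c : ℝ))) + (∑ j, m j • fun c => ((y j c : ℝ)))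
            + (∑ k, n k • fun c => ((z k c : ℝ)))})
    (hQ : Q = {v | ∃ (l : Fin q → ℝ) (m : Fin r → ℝ) (n : Fin s → ℝ),
      (∀ i, 0 ≤ l i) ∧ (∑ i, l i) = 1 ∧ (∀ j, 0 ≤ m j ∧ m j ≤ 1) ∧
      (∀ k, 0 ≤ n k ∧ n k ≤ 1) ∧
      v = (∑ i, l i • fun c => ((x i c : ℝ))) + (∑ j, m j • fun c => ((y j c : ℝ)))
            + (∑ k, n k • fun c => ((z k c : ℝ)))}) :
    ((∃ v ∈ Q, IsIntegerPoint v) → {v ∈ P | IsIntegerPoint v}.Infinite) ∧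
    ((¬ ∃ v ∈ Q, IsIntegerPoint v) → ¬ ∃ v ∈ P, IsIntegerPoint v) := by
  let X : Fin q → Fin d → ℝ := fun i => Rat.cast ∘ x i
  let Y : Fin r → Fin d → ℝ := fun j => Int.cast ∘ y j
  let Z : Fin s → Fin d → ℝ := fun k => Int.cast ∘ z k
  obtain rfl : P = convConeSpan X Y Z := hP
  obtain rfl : Q = convZono X Y Z := hQ
  have hY (j : Fin r) : Y j ∈ integerLattice d := intCast_comp_mem_integerLattice (y j)
  have hZ (k : Fin s) : Z k ∈ integerLattice d := intCast_comp_mem_integerLattice (z k)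
  refine ⟨fun ⟨v, hvQ, hvL⟩ => ?_,
    fun hQL ⟨v, hvP, hvL⟩ => hQL (exists_mem_convZono_of_mem_convConeSpan _ hY hZ hvP hvL)⟩
  rcases hrs with hr | hs
  · exact infinite_setOf_mem_convConeSpan_of_mem_convZono _ hvQ hvL (.inl ⟨⟨0, hr⟩, rfl⟩) (hY _)
      (intCast_comp_ne_zero (hy _))
  · exact infinite_setOf_mem_convConeSpan_of_mem_convZono _ hvQ hvL (.inr ⟨⟨0, hs⟩, rfl⟩) (hZ _)
      (intCast_comp_ne_zero (hz _))
end
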